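/- arXiv:1111.4842 — 3 statements merged into one kernel-verified Lean document; each statement's English description precedes it below -/
import Mathlib

section
/- For every positive integer n with n ≠ 2 and n ≠ 6, β(n) ≥ √n. -/
/-- The Liouville function `λ(n) = (-1)^Ω(n)`. -/
def lam (n : ℕ) : ℤ := (-1) ^ (ArithmeticFunction.cardFactors n)

/-- The alternating sum-of-divisors function `β(n) = ∑_{d ∣ n} d · λ(n/d)`. -/
def beta (n : ℕ) : ℤ := ∑ d ∈ n.divisors, (d : ℤ) * lam (n / d)

/-!
Since `β = id * λ` is multiplicative, it suffices to understand prime powers, where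
`β(p^(k+1)) = p^(k+1) - β(p^k)` gives `p^k (p - 1) ≤ β(p^(k+1)) ≤ p^(k+1)`. Hence `β(q)² ≥ 2q` for
every odd prime power `q ≠ 3`, and `β(2^k)² ≥ 2^k` for `k ≠ 1`, while `β(3) = 2` and `β(2) = 1`.
For odd `m` these multiply out to `β(m)² ≥ 2m` unless `m ∈ {1, 3}`, and this spare factor `2`
compensates for `β(2)² = 1` when `2 ∥ n`, except for `n = 2, 6`.
-/

open ArithmeticFunction

lemma beta_eq_id_mul_liouville (n : ℕ) :
    beta n =
      ((ArithmeticFunction.id : ArithmeticFunction ℕ) * liouville : ArithmeticFunction ℤ) n := by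
  rw [mul_apply, Nat.sum_divisorsAntidiagonal fun d e =>
    ((ArithmeticFunction.id : ArithmeticFunction ℕ) : ArithmeticFunction ℤ) d * liouville e, beta]
  refine Finset.sum_congr rfl fun d hd => ?_
  rw [natCoe_apply, id_apply,
    liouville_apply (Nat.div_pos (Nat.divisor_le hd) (Nat.pos_of_mem_divisors hd)).ne', lam]

lemma isMultiplicative_id_mul_liouville :
    IsMultiplicative
      ((ArithmeticFunction.id : ArithmeticFunction ℕ) * liouville : ArithmeticFunction ℤ) :=
  isMultiplicative_id.natCast.mul isMultiplicative_liouville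

lemma beta_mul {m n : ℕ} (h : m.Coprime n) : beta (m * n) = beta m * beta n := by
  simp only [beta_eq_id_mul_liouville, isMultiplicative_id_mul_liouville.map_mul_of_coprime h]

lemma beta_prime_pow {p : ℕ} (hp : p.Prime) (k : ℕ) :
    beta (p ^ k) = (-1) ^ k * ∑ i ∈ Finset.range (k + 1), (-(p : ℤ)) ^ i := by
  rw [beta, Nat.sum_divisors_prime_pow hp, Finset.mul_sum]
  refine Finset.sum_congr rfl fun i hi => ?_
  obtain ⟨j, rfl⟩ := Nat.exists_eq_add_of_le (Nat.lt_succ_iff.1 (Finset.mem_range.1 hi))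
  rw [Nat.pow_div (Nat.le_add_right i j) hp.pos, Nat.add_sub_cancel_left, lam,
    cardFactors_apply_prime_pow hp, pow_add, mul_right_comm, ← mul_pow]
  push_cast
  ring

lemma beta_prime_pow_succ {p : ℕ} (hp : p.Prime) (k : ℕ) :
    beta (p ^ (k + 1)) = p ^ (k + 1) - beta (p ^ k) := by
  rw [beta_prime_pow hp, beta_prime_pow hp, Finset.sum_range_succ, mul_add, ← mul_pow]
  ring

lemma beta_one : beta 1 = 1 := by simp [beta, lam]

lemma beta_two : beta 2 = 1 := by simpa [beta_one] using beta_prime_pow_succ Nat.prime_two 0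

lemma beta_three : beta 3 = 2 := by simpa [beta_one] using beta_prime_pow_succ Nat.prime_three 0

lemma beta_prime_pow_mem_Icc {p : ℕ} (hp : p.Prime) (k : ℕ) :
    beta (p ^ k) ∈ Set.Icc 1 ((p : ℤ) ^ k) := by
  induction k with
  | zero => simp [beta_one]
  | succ k ih =>
    have hp2 : (2 : ℤ) ≤ p := mod_cast hp.two_le
    have hp1 : (1 : ℤ) ≤ p - 1 := by linarith
    have hpk : (1 : ℤ) ≤ p ^ k := one_le_pow₀ (by linarith)
    rw [beta_prime_pow_succ hp, pow_succ]
    constructor <;> nlinarith [ih.1, ih.2]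

lemma pow_mul_sub_one_le_beta_prime_pow_succ {p : ℕ} (hp : p.Prime) (k : ℕ) :
    (p : ℤ) ^ k * (p - 1) ≤ beta (p ^ (k + 1)) := by
  rw [beta_prime_pow_succ hp, pow_succ]
  linarith [(beta_prime_pow_mem_Icc hp k).2]

lemma prime_pow_le_beta_sq {p k : ℕ} (hp : p.Prime) (hk : k ≠ 1) :
    (p : ℤ) ^ k ≤ beta (p ^ k) ^ 2 := by
  obtain _ | _ | j := k
  · simp [beta_one]
  · exact absurd rfl hk
  have hp2 : (2 : ℤ) ≤ p := mod_cast hp.two_le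
  have hpj : (p : ℤ) ≤ p ^ (j + 1) := le_self_pow₀ (by linarith) j.succ_ne_zero
  have hβ : (p : ℤ) ^ (j + 1) ≤ beta (p ^ (j + 2)) :=
    (le_mul_of_one_le_right (by positivity) (by linarith)).trans
      (pow_mul_sub_one_le_beta_prime_pow_succ hp (j + 1))
  calc (p : ℤ) ^ (j + 2) = p ^ (j + 1) * p := pow_succ _ _
    _ ≤ (p ^ (j + 1)) ^ 2 := by rw [sq]; exact mul_le_mul_of_nonneg_left hpj (by positivity)
    _ ≤ beta (p ^ (j + 2)) ^ 2 := pow_le_pow_left₀ (by positivity) hβ 2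

lemma two_mul_le_beta_prime_pow_sq {p k : ℕ} (hp : p.Prime) (hp2 : p ≠ 2) (hk : k ≠ 0)
    (h3 : p ^ k ≠ 3) : 2 * (p : ℤ) ^ k ≤ beta (p ^ k) ^ 2 := by
  obtain ⟨j, rfl⟩ := Nat.exists_eq_add_one_of_ne_zero hk
  have hp3 : (3 : ℤ) ≤ p := mod_cast (hp.two_le.lt_of_ne' hp2)
  have hβ := pow_mul_sub_one_le_beta_prime_pow_succ hp j
  have hpj : (0 : ℤ) < p ^ j := by positivity
  rw [pow_succ]
  obtain _ | j := j
  · have hp5 : (5 : ℤ) ≤ p := by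
      have : p ≠ 3 := by simpa using h3
      have : p ≠ 4 := by rintro rfl; norm_num at hp
      have := hp.two_le
      exact mod_cast (by omega : 5 ≤ p)
    simp only [pow_zero, one_mul] at hβ ⊢
    nlinarith
  · have hpj' : (p : ℤ) ≤ p ^ (j + 1) := le_self_pow₀ (by linarith) j.succ_ne_zero
    have hsq := pow_le_pow_left₀ (by nlinarith) hβ 2
    have h4 : (4 : ℤ) ≤ (p - 1) ^ 2 := by nlinarith
    nlinarith [mul_le_mul hpj' h4 (by norm_num) (by positivity)]

lemma beta_pos {n : ℕ} (hn : n ≠ 0) : 0 < beta n := by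
  rw [beta_eq_id_mul_liouville, isMultiplicative_id_mul_liouville.multiplicative_factorization _ hn]
  refine Finset.prod_pos fun p hp => ?_
  dsimp only
  rw [← beta_eq_id_mul_liouville]
  exact one_pos.trans_le (beta_prime_pow_mem_Icc (Nat.prime_of_mem_primeFactors hp) _).1

lemma mul_mul_le_beta_sq_mul {a b c d : ℕ} (h : a.Coprime b) (ha : (c * a : ℤ) ≤ beta a ^ 2)
    (hb : (d * b : ℤ) ≤ beta b ^ 2) : (c * d * (a * b : ℕ) : ℤ) ≤ beta (a * b) ^ 2 := by
  rw [beta_mul h, mul_pow, Nat.cast_mul, mul_mul_mul_comm]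
  exact mul_le_mul ha hb (by positivity) (sq_nonneg _)

lemma le_beta_sq_of_two_mul_le {m : ℕ} (h : m ≠ 1 → m ≠ 3 → 2 * (m : ℤ) ≤ beta m ^ 2) :
    (m : ℤ) ≤ beta m ^ 2 := by
  rcases eq_or_ne m 1 with rfl | h1
  · simp [beta_one]
  rcases eq_or_ne m 3 with rfl | h3
  · norm_num [beta_three]
  linarith [h h1 h3]

lemma two_mul_le_beta_sq_of_odd {m : ℕ} (hm : Odd m) (h1 : m ≠ 1) (h3 : m ≠ 3) :
    2 * (m : ℤ) ≤ beta m ^ 2 := by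
  induction m using Nat.recOnPosPrimePosCoprime with
  | prime_pow p k hp hk =>
    refine mod_cast two_mul_le_beta_prime_pow_sq hp ?_ hk.ne' h3
    rintro rfl
    exact Nat.not_even_iff_odd.2 hm ((Nat.even_pow' hk.ne').2 even_two)
  | zero => exact absurd hm Nat.not_odd_zero
  | one => exact absurd rfl h1
  | coprime a b ha hb hab iha ihb =>
    obtain ⟨hoa, hob⟩ := Nat.odd_mul.1 hm
    rcases eq_or_ne a 3 with rfl | ha3
    · have hb3 : b ≠ 3 := by rintro rfl; norm_num at hab
      simpa using mul_mul_le_beta_sq_mul (c := 1) (d := 2) hab (by norm_num [beta_three])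
        (ihb hob hb.ne' hb3)
    · simpa using mul_mul_le_beta_sq_mul (c := 2) (d := 1) hab (iha hoa ha.ne' ha3)
        (by simpa using le_beta_sq_of_two_mul_le (ihb hob))

lemma le_beta_sq_of_odd {m : ℕ} (hm : Odd m) : (m : ℤ) ≤ beta m ^ 2 :=
  le_beta_sq_of_two_mul_le (two_mul_le_beta_sq_of_odd hm)

theorem stmt_6 (n : ℕ) (hn : 0 < n) (h2 : n ≠ 2) (h6 : n ≠ 6) :
    Real.sqrt n ≤ (beta n : ℝ) := by
  rw [Real.sqrt_le_left (mod_cast (beta_pos hn.ne').le)]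
  suffices (n : ℤ) ≤ beta n ^ 2 by exact_mod_cast this
  obtain ⟨k, m, hm, rfl⟩ := Nat.exists_eq_two_pow_mul_odd hn.ne'
  have hcop : (2 ^ k).Coprime m := (Nat.coprime_two_left.2 hm).pow_left k
  rcases eq_or_ne k 1 with rfl | hk
  · have := two_mul_le_beta_sq_of_odd hm (by rintro rfl; simp at h2) (by rintro rfl; simp at h6)
    rw [beta_mul hcop, pow_one, beta_two, one_mul]
    push_cast
    exact this
  · simpa using mul_mul_le_beta_sq_mul (c := 1) (d := 1) hcop
      (by simpa using prime_pow_le_beta_sq Nat.prime_two hk) (by simpa using le_beta_sq_of_odd hm)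
end

section
/- For every positive integer n, β(n)² = Σ_{dk = n} d·2^{ω(d)}·λ(d)·σ₂(k), where ω(d) is the number of distinct prime factors of d and σ₂(k) = Σ_{e∣k} e². -/
/-!
Both sides are multiplicative in `n`: `β = id ∗ λ`, and the right-hand side is the
Dirichlet convolution of `d ↦ d 2^ω(d) λ(d)` with `σ₂`. So it suffices to compare them at `p^a`.
Writing `y = -p`, one has `β(p^a) = (-1)^a (1 + y + ⋯ + y^a)`, `σ₂(p^m) = 1 + y² + ⋯ + y^{2m}` and
`p^j 2^ω(p^j) λ(p^j) = c_j y^j` with `c_0 = 1`, `c_j = 2` for `j > 0`, and the claim becomes the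
polynomial identity `(∑_{j ≤ a} y^j)² = ∑_{j ≤ a} c_j y^j ∑_{t ≤ a-j} y^{2t}`.
-/

open Finset

section GeomSum

variable {R : Type*} [CommRing R] (y : R)

lemma sum_pow_mul_geom_sum_sq_succ (a : ℕ) :
    ∑ j ∈ range (a + 1 + 1), y ^ j * ∑ t ∈ range (a + 1 - j + 1), (y ^ 2) ^ t =
      ∑ t ∈ range (a + 1 + 1), (y ^ 2) ^ t +
        y * ∑ j ∈ range (a + 1), y ^ j * ∑ t ∈ range (a - j + 1), (y ^ 2) ^ t := by
  rw [sum_range_succ', pow_zero, one_mul, Nat.sub_zero, mul_sum, add_comm]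
  congr 1
  refine sum_congr rfl fun j _ => ?_
  rw [Nat.add_sub_add_right, pow_succ]
  ring

lemma one_sub_mul_sum_pow_mul_geom_sum_sq (a : ℕ) :
    (1 - y) * ∑ j ∈ range (a + 1), y ^ j * ∑ t ∈ range (a - j + 1), (y ^ 2) ^ t =
      ∑ t ∈ range (a + 1), (y ^ 2) ^ t - y ^ (a + 1) * ∑ j ∈ range (a + 1), y ^ j := by
  induction a with
  | zero => simp
  | succ a ih =>
    rw [sum_pow_mul_geom_sum_sq_succ, sum_range_succ (fun t => (y ^ 2) ^ t) (a + 1),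
      sum_range_succ (fun j => y ^ j) (a + 1)]
    linear_combination y * ih

lemma sq_geom_sum_add_geom_sum_sq (a : ℕ) :
    (∑ j ∈ range (a + 1), y ^ j) ^ 2 + ∑ t ∈ range (a + 1), (y ^ 2) ^ t =
      2 * ∑ j ∈ range (a + 1), y ^ j * ∑ t ∈ range (a - j + 1), (y ^ 2) ^ t := by
  induction a with
  | zero => norm_num
  | succ a ih =>
    rw [sum_pow_mul_geom_sum_sq_succ, sum_range_succ (fun t => (y ^ 2) ^ t) (a + 1),
      sum_range_succ (fun j => y ^ j) (a + 1)]
    linear_combination ih + 2 * one_sub_mul_sum_pow_mul_geom_sum_sq y a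

theorem sq_geom_sum_eq (a : ℕ) :
    (∑ j ∈ range (a + 1), y ^ j) ^ 2 =
      ∑ j ∈ range (a + 1), (if j = 0 then 1 else 2) * y ^ j *
        ∑ t ∈ range (a - j + 1), (y ^ 2) ^ t := by
  have key := sq_geom_sum_add_geom_sum_sq y a
  rw [sum_range_succ' (fun j => y ^ j * ∑ t ∈ range (a - j + 1), (y ^ 2) ^ t)] at key
  rw [sum_range_succ'
    (fun j => (if j = 0 then 1 else 2) * y ^ j * ∑ t ∈ range (a - j + 1), (y ^ 2) ^ t)]
  simp only [Nat.succ_ne_zero, ↓reduceIte, mul_assoc, ← mul_sum] at key ⊢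
  linear_combination key

end GeomSum

open ArithmeticFunction
open scoped ArithmeticFunction.omega ArithmeticFunction.sigma

theorem ArithmeticFunction.mul_apply_prime_pow {R : Type*} [Semiring R]
    (f g : ArithmeticFunction R) {p : ℕ} (hp : p.Prime) (a : ℕ) :
    (f * g) (p ^ a) = ∑ j ∈ range (a + 1), f (p ^ j) * g (p ^ (a - j)) := by
  rw [mul_apply, Nat.sum_divisorsAntidiagonal (fun i k => f i * g k),
    Nat.sum_divisors_prime_pow hp]
  refine sum_congr rfl fun j hj => ?_
  rw [Nat.pow_div (Nat.lt_succ_iff.mp (mem_range.mp hj)) hp.pos]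

theorem ArithmeticFunction.liouville_apply_prime_pow {p : ℕ} (hp : p.Prime) (k : ℕ) :
    liouville (p ^ k) = (-1) ^ k := by
  rw [liouville_apply (pow_ne_zero _ hp.ne_zero), cardFactors_apply_prime_pow hp]

lemma lam_eq_liouville {n : ℕ} (hn : n ≠ 0) : lam n = liouville n :=
  (liouville_apply hn).symm

def betaFun : ArithmeticFunction ℤ := (ArithmeticFunction.id : ArithmeticFunction ℕ) * liouville

lemma beta_eq_betaFun (n : ℕ) : beta n = betaFun n := by
  rw [betaFun, mul_apply, beta,
    Nat.sum_divisorsAntidiagonal fun d e =>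
      (ArithmeticFunction.id : ArithmeticFunction ℤ) d * liouville e]
  refine sum_congr rfl fun d hd => ?_
  have hnd : n / d ≠ 0 := (Nat.div_pos (Nat.divisor_le hd) (Nat.pos_of_mem_divisors hd)).ne'
  rw [natCoe_apply, id_apply, lam_eq_liouville hnd]

lemma betaFun_apply_prime_pow {p : ℕ} (hp : p.Prime) (a : ℕ) :
    betaFun (p ^ a) = (-1) ^ a * ∑ j ∈ range (a + 1), (-(p : ℤ)) ^ j := by
  rw [betaFun, mul_apply_prime_pow _ _ hp, mul_sum]
  refine sum_congr rfl fun j hj => ?_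
  obtain ⟨k, rfl⟩ := Nat.exists_eq_add_of_le (Nat.lt_succ_iff.mp (mem_range.mp hj))
  rw [natCoe_apply, id_apply, liouville_apply_prime_pow hp, Nat.add_sub_cancel_left, neg_pow,
    pow_add]
  have hsign : (-1 : ℤ) ^ j * (-1) ^ j = 1 := pow_mul_pow_eq_one j (by norm_num)
  push_cast
  linear_combination (-(p : ℤ) ^ j * (-1) ^ k) * hsign

def twoPowOmegaLiouvilleId : ArithmeticFunction ℤ :=
  ⟨fun d => d * 2 ^ ω d * liouville d, by simp⟩

lemma twoPowOmegaLiouvilleId_apply (d : ℕ) :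
    twoPowOmegaLiouvilleId d = d * 2 ^ ω d * liouville d := rfl

lemma isMultiplicative_twoPowOmegaLiouvilleId : twoPowOmegaLiouvilleId.IsMultiplicative := by
  refine ⟨by simp [twoPowOmegaLiouvilleId_apply, liouville_apply_one], fun {m n} hmn => ?_⟩
  simp only [twoPowOmegaLiouvilleId_apply, cardDistinctFactors_mul hmn, liouville_apply_mul,
    pow_add]
  push_cast
  ring

lemma twoPowOmegaLiouvilleId_apply_prime_pow {p : ℕ} (hp : p.Prime) (j : ℕ) :
    twoPowOmegaLiouvilleId (p ^ j) = (if j = 0 then 1 else 2) * (-(p : ℤ)) ^ j := by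
  rw [twoPowOmegaLiouvilleId_apply, liouville_apply_prime_pow hp, neg_pow]
  split_ifs with hj
  · simp [hj]
  · rw [cardDistinctFactors_apply_prime_pow hp hj]
    push_cast
    ring

lemma sigma_two_apply_prime_pow {p : ℕ} (hp : p.Prime) (m : ℕ) :
    (σ 2 (p ^ m) : ℤ) = ∑ t ∈ range (m + 1), ((-(p : ℤ)) ^ 2) ^ t := by
  simp [sigma_apply_prime_pow hp, pow_mul']

theorem betaFun_pmul_self :
    betaFun.pmul betaFun = twoPowOmegaLiouvilleId * (σ 2 : ArithmeticFunction ℤ) := by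
  have hβ : betaFun.IsMultiplicative :=
    isMultiplicative_id.natCast.mul isMultiplicative_liouville
  rw [IsMultiplicative.eq_iff_eq_on_prime_powers _ (hβ.pmul hβ) _
    (isMultiplicative_twoPowOmegaLiouvilleId.mul isMultiplicative_sigma.natCast)]
  intro p a hp
  rw [pmul_apply, ← sq, betaFun_apply_prime_pow hp, mul_pow, pow_right_comm, neg_one_sq, one_pow,
    one_mul, sq_geom_sum_eq, mul_apply_prime_pow _ _ hp]
  refine sum_congr rfl fun j _ => ?_
  rw [twoPowOmegaLiouvilleId_apply_prime_pow hp, natCoe_apply, sigma_two_apply_prime_pow hp]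

theorem stmt_13_general (n : ℕ) :
    beta n ^ 2 =
      ∑ p ∈ n.divisorsAntidiagonal,
        (p.1 : ℤ) * 2 ^ (ArithmeticFunction.cardDistinctFactors p.1) * lam p.1 *
          (ArithmeticFunction.sigma 2 p.2 : ℤ) := by
  rw [beta_eq_betaFun, sq, ← pmul_apply, betaFun_pmul_self, mul_apply]
  refine sum_congr rfl fun d hd => ?_
  have hd₁ : d.1 ≠ 0 :=
    (Nat.pos_of_mem_divisors (Nat.fst_mem_divisors_of_mem_antidiagonal hd)).ne'
  rw [twoPowOmegaLiouvilleId_apply, natCoe_apply, lam_eq_liouville hd₁]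

theorem stmt_13 (n : ℕ) (hn : 0 < n) :
    beta n ^ 2 =
      ∑ p ∈ n.divisorsAntidiagonal,
        (p.1 : ℤ) * 2 ^ (ArithmeticFunction.cardDistinctFactors p.1) * lam p.1 *
          (ArithmeticFunction.sigma 2 p.2 : ℤ) :=
  stmt_13_general n
end

section
/- For every positive integer n, β(n)·σ(n) = Σ_{d²k = n} d²·2^{ω(d)}·β₂(k), the sum being over all pairs (d, k) with d²k = n, where σ(n) = Σ_{e∣n} e, ω(d) is the number of distinct prime factors of d, and β₂(k) = Σ_{e∣k} e²·λ(k/e). -/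
/-- `β₂(n) = ∑_{d ∣ n} d² · λ(n/d)`. -/
def beta2 (n : ℕ) : ℤ := ∑ d ∈ n.divisors, (d : ℤ) ^ 2 * lam (n / d)

/-!
Both sides are multiplicative in `n`: the left one is the pointwise product of `σ` and
`β = id * λ`, the right one is the Dirichlet convolution `t * β₂` with `β₂ = id² * λ` and `t` the
multiplicative function supported on squares with `t(d²) = d² 2^ω(d)`. So it suffices to compare
them at a prime power `p^a`. Geometric sums give `(p + 1) β(p^a) = p^(a+1) + (-1)^a` and
`(p - 1) σ(p^a) = p^(a+1) - 1`, hence `(p² - 1) β(p^a) σ(p^a) = (p^(a+1) + (-1)^a) (p^(a+1) - 1)`.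
On the right, `t(p^(i+2)) = p² t(p^i)` for `i > 0` yields the recurrence
`G(p^(a+2)) = β₂(p^(a+2)) + p² (G(p^a) + β₂(p^a))` for `G = t * β₂`, and together with
`(p² + 1) β₂(p^c) = p^(2c+2) + (-1)^c` it shows by two-step induction that `(p² - 1) G(p^a)` has
the same closed form.
-/

open Finset
open scoped ArithmeticFunction.omega ArithmeticFunction.sigma

theorem Nat.Coprime.isSquare_mul_iff {m n : ℕ} (h : m.Coprime n) :
    IsSquare (m * n) ↔ IsSquare m ∧ IsSquare n := by
  refine ⟨fun ⟨c, hc⟩ => ?_, fun ⟨hm, hn⟩ => hm.mul hn⟩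
  rw [← sq] at hc
  obtain ⟨a, rfl⟩ := exists_eq_pow_of_mul_eq_pow (Nat.isUnit_iff.mpr h) hc
  obtain ⟨b, rfl⟩ := exists_eq_pow_of_mul_eq_pow (Nat.isUnit_iff.mpr h.symm)
    ((mul_comm _ _).trans hc)
  exact ⟨IsSquare.sq a, IsSquare.sq b⟩

theorem Nat.Prime.isSquare_pow_iff {p : ℕ} (hp : p.Prime) {k : ℕ} : IsSquare (p ^ k) ↔ Even k := by
  refine ⟨fun ⟨c, hc⟩ => ?_, fun hk => hk.isSquare_pow p⟩
  obtain ⟨j, -, rfl⟩ := (Nat.dvd_prime_pow hp).1 (Dvd.intro _ hc.symm)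
  rw [← pow_add] at hc
  exact ⟨j, Nat.pow_right_injective hp.two_le hc⟩

theorem Nat.sum_divisors_eq_sum_sq_dvd {M : Type*} [AddCommMonoid M] (f : ℕ → M)
    (hf : ∀ u, ¬IsSquare u → f u = 0) (n : ℕ) :
    ∑ u ∈ n.divisors, f u = ∑ d ∈ n.divisors.filter (fun d => d ^ 2 ∣ n), f (d ^ 2) := by
  rw [← sum_image fun x _ y _ h => Nat.pow_left_injective two_ne_zero h]
  refine (sum_subset (fun u hu => ?_) fun u hu hnot => hf u ?_).symm
  · obtain ⟨d, hd, rfl⟩ := mem_image.1 hu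
    simp only [mem_filter, Nat.mem_divisors] at hd ⊢
    exact ⟨hd.2, hd.1.2⟩
  · rintro ⟨d, rfl⟩
    refine hnot (mem_image.2 ⟨d, ?_, sq d⟩)
    simp only [mem_filter, Nat.mem_divisors, sq] at hu ⊢
    exact ⟨⟨(dvd_mul_right d d).trans hu.1, hu.2⟩, hu.1⟩

namespace ArithmeticFunction

theorem mul_apply_prime_pow_s15 {R : Type*} [Semiring R] (f g : ArithmeticFunction R) {p : ℕ}
    (hp : p.Prime) (a : ℕ) :
    (f * g) (p ^ a) = ∑ i ∈ range (a + 1), f (p ^ i) * g (p ^ (a - i)) := by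
  rw [mul_apply, Nat.sum_divisorsAntidiagonal (fun x y => f x * g y),
    Nat.sum_divisors_prime_pow hp]
  refine sum_congr rfl fun i hi => ?_
  rw [Nat.pow_div (by grind) hp.pos]

theorem liouville_apply_prime_pow_s15 {p : ℕ} (hp : p.Prime) (a : ℕ) :
    liouville (p ^ a) = (-1) ^ a := by
  rw [liouville_apply (pow_ne_zero a hp.ne_zero), cardFactors_apply_prime_pow hp]

theorem cardDistinctFactors_pow (n : ℕ) {k : ℕ} (hk : k ≠ 0) : ω (n ^ k) = ω n := by
  have hcard (m : ℕ) : ω m = m.primeFactors.card := by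
    rw [cardDistinctFactors_apply, ← List.card_toFinset]; rfl
  rw [hcard, hcard, Nat.primeFactors_pow n hk]

/-- `altSigma 1` is `β` and `altSigma 2` is `β₂` (see `altSigma_apply`). -/
def altSigma (k : ℕ) : ArithmeticFunction ℤ :=
  ((pow k : ArithmeticFunction ℕ) : ArithmeticFunction ℤ) * liouville

theorem isMultiplicative_altSigma (k : ℕ) : (altSigma k).IsMultiplicative :=
  isMultiplicative_pow.natCast.mul isMultiplicative_liouville

theorem altSigma_apply (k n : ℕ) : altSigma k n = ∑ d ∈ n.divisors, (d : ℤ) ^ k * lam (n / d) := by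
  rw [altSigma, mul_apply, Nat.sum_divisorsAntidiagonal
    (fun x y => ((pow k : ArithmeticFunction ℕ) : ArithmeticFunction ℤ) x * liouville y)]
  refine sum_congr rfl fun d hd => ?_
  have hnd : n / d ≠ 0 := (Nat.div_pos (Nat.divisor_le hd) (Nat.pos_of_mem_divisors hd)).ne'
  rw [liouville_apply hnd, lam, natCoe_apply, pow_apply,
    if_neg fun h => (Nat.pos_of_mem_divisors hd).ne' h.2]
  push_cast; rfl

theorem altSigma_apply_prime_pow (k : ℕ) {p : ℕ} (hp : p.Prime) (a : ℕ) :
    ((p : ℤ) ^ k + 1) * altSigma k (p ^ a) = ((p : ℤ) ^ k) ^ (a + 1) + (-1) ^ a := by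
  have hterm (i : ℕ) : (pow k (p ^ i) : ℤ) = ((p : ℤ) ^ k) ^ i := by
    rw [pow_apply, if_neg fun h => pow_ne_zero i hp.ne_zero h.2]
    push_cast; ring
  have hgeom := geom_sum₂_mul ((p : ℤ) ^ k) (-1) (a + 1)
  simp only [Nat.add_sub_cancel] at hgeom
  rw [altSigma, mul_apply_prime_pow_s15 _ _ hp]
  simp only [natCoe_apply, hterm, liouville_apply_prime_pow_s15 hp]
  linear_combination hgeom

/-- The right-hand side of the identity is `(squareWeight * β₂)(n)`. -/
def squareWeight : ArithmeticFunction ℤ :=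
  ⟨fun m => if IsSquare m then (m : ℤ) * 2 ^ ω m else 0, by simp⟩

theorem squareWeight_apply (m : ℕ) :
    squareWeight m = if IsSquare m then (m : ℤ) * 2 ^ ω m else 0 := rfl

theorem squareWeight_apply_sq (d : ℕ) : squareWeight (d ^ 2) = (d : ℤ) ^ 2 * 2 ^ ω d := by
  rw [squareWeight_apply, if_pos (IsSquare.sq d), cardDistinctFactors_pow d two_ne_zero]
  push_cast; rfl

theorem isMultiplicative_squareWeight : squareWeight.IsMultiplicative := by
  refine ⟨by simp [squareWeight_apply], fun {m n} hmn => ?_⟩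
  simp only [squareWeight_apply, hmn.isSquare_mul_iff, cardDistinctFactors_mul hmn]
  split_ifs <;> first | tauto | (push_cast; ring)

theorem squareWeight_apply_prime_pow {p : ℕ} (hp : p.Prime) (k : ℕ) :
    squareWeight (p ^ k) = if Even k then (p : ℤ) ^ k * 2 ^ ω (p ^ k) else 0 := by
  simp only [squareWeight_apply, hp.isSquare_pow_iff, Nat.cast_pow]

theorem squareWeight_apply_prime_pow_add_two {p : ℕ} (hp : p.Prime) (i : ℕ) :
    squareWeight (p ^ (i + 2)) = (p : ℤ) ^ 2 * (squareWeight (p ^ i) + if i = 0 then 1 else 0) := by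
  have hpar : Even (i + 2) ↔ Even i := by simp [Nat.even_add]
  rw [squareWeight_apply_prime_pow hp, squareWeight_apply_prime_pow hp,
    cardDistinctFactors_apply_prime_pow hp (by omega)]
  simp only [hpar]
  rcases eq_or_ne i 0 with rfl | hi
  · simp
  · rw [cardDistinctFactors_apply_prime_pow hp hi]
    split_ifs <;> ring

theorem squareWeight_mul_altSigma_two_apply_prime_pow_add_two {p : ℕ} (hp : p.Prime) (a : ℕ) :
    (squareWeight * altSigma 2) (p ^ (a + 2)) =
      altSigma 2 (p ^ (a + 2)) +
        (p : ℤ) ^ 2 * ((squareWeight * altSigma 2) (p ^ a) + altSigma 2 (p ^ a)) := by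
  have hshift : ∀ i ∈ range (a + 1),
      squareWeight (p ^ (i + 1 + 1)) * altSigma 2 (p ^ (a + 2 - (i + 1 + 1))) =
        (p : ℤ) ^ 2 * (squareWeight (p ^ i) * altSigma 2 (p ^ (a - i))) +
          if i = 0 then (p : ℤ) ^ 2 * altSigma 2 (p ^ a) else 0 := by
    intro i _
    rw [squareWeight_apply_prime_pow_add_two hp, show a + 2 - (i + 1 + 1) = a - i by omega]
    split_ifs with hi
    · simp only [hi, Nat.sub_zero]; ring
    · ring
  have hsq1 : squareWeight (p ^ 1) = 0 := by
    rw [squareWeight_apply_prime_pow hp]; simp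
  rw [mul_apply_prime_pow_s15 _ _ hp, mul_apply_prime_pow_s15 _ _ hp, sum_range_succ' _ (a + 2),
    sum_range_succ' _ (a + 1), sum_congr rfl hshift, sum_add_distrib, ← mul_sum,
    sum_ite_eq' _ 0, if_pos (by simp), zero_add, hsq1, pow_zero, Nat.sub_zero,
    isMultiplicative_squareWeight.map_one]
  ring

theorem sq_sub_one_mul_squareWeight_mul_altSigma_two_apply_prime_pow {p : ℕ} (hp : p.Prime)
    (a : ℕ) :
    ((p : ℤ) ^ 2 - 1) * (squareWeight * altSigma 2) (p ^ a) =
      ((p : ℤ) ^ (a + 1) + (-1) ^ a) * ((p : ℤ) ^ (a + 1) - 1) := by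
  have hq : (p : ℤ) ^ 2 + 1 ≠ 0 := by positivity
  have hB (c : ℕ) := altSigma_apply_prime_pow 2 hp c
  induction a using Nat.twoStepInduction with
  | zero =>
    rw [pow_zero, (isMultiplicative_squareWeight.mul (isMultiplicative_altSigma 2)).map_one]
    ring
  | one =>
    have hG : (squareWeight * altSigma 2) (p ^ 1) = altSigma 2 (p ^ 1) := by
      rw [mul_apply_prime_pow_s15 _ _ hp, sum_range_succ, sum_range_one,
        squareWeight_apply_prime_pow hp, squareWeight_apply_prime_pow hp]
      simp
    apply mul_left_cancel₀ hq
    rw [hG]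
    linear_combination ((p : ℤ) ^ 2 - 1) * hB 1
  | more a ih _ =>
    apply mul_left_cancel₀ hq
    rw [squareWeight_mul_altSigma_two_apply_prime_pow_add_two hp]
    linear_combination ((p : ℤ) ^ 2 - 1) * hB (a + 2) + (p : ℤ) ^ 2 * ((p : ℤ) ^ 2 + 1) * ih +
      (p : ℤ) ^ 2 * ((p : ℤ) ^ 2 - 1) * hB a

theorem sq_sub_one_mul_pmul_sigma_apply_prime_pow {p : ℕ} (hp : p.Prime) (a : ℕ) :
    ((p : ℤ) ^ 2 - 1) * (altSigma 1).pmul (σ 1 : ArithmeticFunction ℤ) (p ^ a) =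
      ((p : ℤ) ^ (a + 1) + (-1) ^ a) * ((p : ℤ) ^ (a + 1) - 1) := by
  have hβ := altSigma_apply_prime_pow 1 hp a
  have hσ : (σ 1 (p ^ a) : ℤ) * ((p : ℤ) - 1) = (p : ℤ) ^ (a + 1) - 1 := by
    rw [sigma_one_apply_prime_pow hp]
    push_cast
    exact geom_sum_mul _ _
  rw [pow_one] at hβ
  rw [pmul_apply, natCoe_apply]
  linear_combination ((p : ℤ) - 1) * (σ 1 (p ^ a) : ℤ) * hβ + ((p : ℤ) ^ (a + 1) + (-1) ^ a) * hσ

theorem pmul_sigma_apply_prime_pow {p : ℕ} (hp : p.Prime) (a : ℕ) :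
    (altSigma 1).pmul (σ 1 : ArithmeticFunction ℤ) (p ^ a) =
      (squareWeight * altSigma 2) (p ^ a) := by
  have hp2 : (2 : ℤ) ≤ p := by exact_mod_cast hp.two_le
  have hq : (p : ℤ) ^ 2 - 1 ≠ 0 := by nlinarith
  apply mul_left_cancel₀ hq
  rw [sq_sub_one_mul_pmul_sigma_apply_prime_pow hp,
    sq_sub_one_mul_squareWeight_mul_altSigma_two_apply_prime_pow hp]

theorem pmul_sigma_eq_squareWeight_mul_altSigma_two :
    (altSigma 1).pmul (σ 1 : ArithmeticFunction ℤ) = squareWeight * altSigma 2 :=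
  (IsMultiplicative.eq_iff_eq_on_prime_powers _
    ((isMultiplicative_altSigma 1).pmul isMultiplicative_sigma.natCast) _
    (isMultiplicative_squareWeight.mul (isMultiplicative_altSigma 2))).2
    fun _ a hp => pmul_sigma_apply_prime_pow hp a

end ArithmeticFunction

open ArithmeticFunction in
theorem stmt_15_general (n : ℕ) :
    beta n * (ArithmeticFunction.sigma 1 n : ℤ) =
      ∑ d ∈ n.divisors.filter (fun d => d ^ 2 ∣ n),
        (d : ℤ) ^ 2 * 2 ^ (ArithmeticFunction.cardDistinctFactors d) * beta2 (n / d ^ 2) := by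
  have hβ : beta n = altSigma 1 n := by simp only [altSigma_apply, pow_one, beta]
  calc beta n * (σ 1 n : ℤ)
      = (altSigma 1).pmul (σ 1 : ArithmeticFunction ℤ) n := by rw [pmul_apply, natCoe_apply, hβ]
    _ = ∑ u ∈ n.divisors, squareWeight u * altSigma 2 (n / u) := by
      rw [pmul_sigma_eq_squareWeight_mul_altSigma_two, mul_apply,
        Nat.sum_divisorsAntidiagonal (fun u v => squareWeight u * altSigma 2 v)]
    _ = ∑ d ∈ n.divisors.filter (fun d => d ^ 2 ∣ n),
          squareWeight (d ^ 2) * altSigma 2 (n / d ^ 2) :=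
      Nat.sum_divisors_eq_sum_sq_dvd _ (fun u hu => by simp [squareWeight_apply, hu]) n
    _ = _ := sum_congr rfl fun d _ => by rw [squareWeight_apply_sq, altSigma_apply, beta2]

theorem stmt_15 (n : ℕ) (hn : 0 < n) :
    beta n * (ArithmeticFunction.sigma 1 n : ℤ) =
      ∑ d ∈ n.divisors.filter (fun d => d ^ 2 ∣ n),
        (d : ℤ) ^ 2 * 2 ^ (ArithmeticFunction.cardDistinctFactors d) * beta2 (n / d ^ 2) :=
  stmt_15_general n
end
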